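/- Let (A, m) be an abstract complete intersection of dimension d > 0, P a prime ideal with height(m/P) = 1, f ∈ m \ P, and M the d-th syzygy of A/P over A. Then for each i > 0, the support of Ext^i_{A_f}(M_f, M_f) over A_f is contained in the maximal ideal PA_f of A_f. -/

import Mathlib

universe u

open CategoryTheory

/-- A regular local ring: a Noetherian local ring whose maximal ideal can be generated by
`dim Q` elements. -/
def IsRegularLocalRing' (Q : Type u) [CommRing Q] : Prop :=
  IsNoetherianRing Q ∧ ∃ (hQ : IsLocalRing Q) (s : Finset Q),
    Ideal.span (s : Set Q) = @IsLocalRing.maximalIdeal Q _ hQ ∧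
      (s.card : WithBot ℕ∞) = ringKrullDim Q

/-- An abstract complete intersection of codimension `c`. -/
def IsCompleteIntersectionOfCodim (A : Type u) [CommRing A] (c : ℕ) : Prop :=
  IsNoetherianRing A ∧ ∃ (hA : IsLocalRing A) (Q : Type u) (_ : CommRing Q),
    IsRegularLocalRing' Q ∧ ∃ rs : List Q, RingTheory.Sequence.IsRegular Q rs ∧ rs.length = c ∧
      Nonempty ((AdicCompletion (@IsLocalRing.maximalIdeal A _ hA) A) ≃+*
        (Q ⧸ Ideal.span {x | x ∈ rs}))

/-- `Ext^n_A(M, N)` as an `A`-module (via derived functors of `Hom`). -/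
noncomputable def extMod (A : Type u) [CommRing A] (n : ℕ) (M N : Type u)
    [AddCommGroup M] [Module A M] [AddCommGroup N] [Module A N] : ModuleCat A :=
  ((Ext A (ModuleCat A) n).obj (Opposite.op (ModuleCat.of A M))).obj (ModuleCat.of A N)

/-- `IsMinimalSyzygy A d M N` : `M` is (isomorphic to) the `d`-th syzygy of `N` in a
minimal free resolution of `N` over the local ring `A`, expressed through the chain of
short exact sequences `0 → Syz_{k+1} N → F_k → Syz_k N → 0` with `F_k` finite free and
`Syz_{k+1} N ⊆ m·F_k` (minimality). -/
def IsMinimalSyzygy (A : Type u) [CommRing A] [IsLocalRing A] :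
    ℕ → (M : Type u) → [AddCommGroup M] → [Module A M] →
      (N : Type u) → [AddCommGroup N] → [Module A N] → Prop
  | 0, M, _, _, N, _, _ => Nonempty (M ≃ₗ[A] N)
  | d + 1, M, _, _, N, _, _ =>
      ∃ (F : Type u) (_ : AddCommGroup F) (_ : Module A F),
        Module.Free A F ∧ Module.Finite A F ∧
        ∃ ι : M →ₗ[A] F, Function.Injective ι ∧
          LinearMap.range ι ≤ (IsLocalRing.maximalIdeal A) • (⊤ : Submodule A F) ∧
          IsMinimalSyzygy A d (F ⧸ LinearMap.range ι) N


/-!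
For `x ∈ P`, multiplication by `x` kills `A ⧸ P`; going up the syzygy sequence
`0 → Syz_{k+1} → F_k → Syz_k → 0` and lifting through the free modules, multiplication by `x`
on `M` factors through a free module, and this survives localization at `f`. An endomorphism
factoring through a projective object acts by zero on `Ext^{i}(-, Y)` for `i > 0`, so `P·A_f`
annihilates `Ext^i_{A_f}(M_f, M_f)` and its support lies in `V(P·A_f)`. A prime of `A_f`
containing `P·A_f` contracts to a prime `p ⊇ P` of `A` avoiding `f ∈ m`; since
`dim A/P = 1`, `p` is `P` or maximal, and it cannot be `m`.
-/

open Limits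

universe v w

theorem Homotopy.smul_id_f_succ_eq {R : Type w} [Ring R] {C : Type*} [Category.{v} C]
    [Preadditive C] [Linear R C] {K : ChainComplex C ℕ} {r : R} {ψ : K ⟶ K}
    (H : Homotopy ψ (r • 𝟙 K)) {n : ℕ} (hψ : ψ.f (n + 1) = 0) :
    r • 𝟙 (K.X (n + 1)) =
      K.d (n + 1) n ≫ (-H.hom n (n + 1)) + (-H.hom (n + 1) (n + 2)) ≫ K.d (n + 2) (n + 1) := by
  have h := H.comm (n + 1)
  rw [dNext_eq H.hom (show (ComplexShape.down ℕ).Rel (n + 1) n by simp),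
    prevD_eq H.hom (show (ComplexShape.down ℕ).Rel (n + 2) (n + 1) by simp), hψ,
    HomologicalComplex.smul_f_apply, HomologicalComplex.id_f, eq_comm,
    add_eq_zero_iff_neg_eq] at h
  rw [← h, neg_add, Preadditive.comp_neg, Preadditive.neg_comp]

namespace CategoryTheory

variable {R : Type w} [Ring R] {C : Type*} [Category.{v} C] [Abelian C] [Linear R C]

namespace ProjectiveResolution

lemma lift_comp_lift_self_f_succ {X G : C} [Projective G] (P : ProjectiveResolution X)
    (a : X ⟶ G) (b : G ⟶ X) (n : ℕ) :
    (lift a P (self G) ≫ lift b (self G) P).f (n + 1) = 0 := by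
  have hG : IsZero ((self G).complex.X (n + 1)) :=
    HomologicalComplex.isZero_single_obj_X _ 0 G (n + 1) (by simp)
  rw [HomologicalComplex.comp_f, hG.eq_of_tgt ((lift a P (self G)).f (n + 1)) 0, zero_comp]

noncomputable def homotopySMulId {X G : C} [Projective G] (P : ProjectiveResolution X) {r : R}
    {a : X ⟶ G} {b : G ⟶ X} (hab : a ≫ b = r • 𝟙 X) :
    Homotopy (lift a P (self G) ≫ lift b (self G) P) (r • 𝟙 P.complex) :=
  liftHomotopy (r • 𝟙 X) _ _
    (by rw [Category.assoc, lift_commutes, lift_commutes_assoc, ← Functor.map_comp, hab])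
    (by
      ext
      simp only [HomologicalComplex.comp_f, HomologicalComplex.smul_f_apply, Linear.smul_comp,
        Category.id_comp, ChainComplex.single₀_map_f_zero]
      exact ((Linear.comp_smul _ _ X (P.π.f 0) r (𝟙 X)).trans
        (congrArg (r • ·) (Category.comp_id _))).symm)

end ProjectiveResolution

variable [EnoughProjectives C]

lemma ProjectiveResolution.smul_ext_eq_zero_of_smul_id_eq {X : C} (P : ProjectiveResolution X)
    {r : R} {n : ℕ} {h₁ : P.complex.X n ⟶ P.complex.X (n + 1)}
    {h₂ : P.complex.X (n + 1) ⟶ P.complex.X (n + 2)}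
    (hr : r • 𝟙 (P.complex.X (n + 1)) =
      P.complex.d (n + 1) n ≫ h₁ + h₂ ≫ P.complex.d (n + 2) (n + 1))
    (Y : C) (e : ((Ext R C (n + 1)).obj (Opposite.op X)).obj Y) : r • e = 0 := by
  let K := P.complex.linearYonedaObj R Y
  let T := K.sc' n (n + 1) (n + 2)
  let Φ := P.isoExt (n + 1) Y ≪≫ K.homologyIsoSc' n (n + 1) (n + 2) (by simp) (by simp) ≪≫
    T.moduleCatHomologyIso
  suffices ∀ y : T.moduleCatLeftHomologyData.H, r • y = 0 by
    rw [← Φ.toLinearEquiv.map_eq_zero_iff, map_smul, this]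
  intro y
  obtain ⟨⟨(z : P.complex.X (n + 1) ⟶ Y), hz⟩, rfl⟩ := Submodule.Quotient.mk_surjective _ y
  have hz : P.complex.d (n + 2) (n + 1) ≫ z = 0 := hz
  refine (Submodule.Quotient.mk_smul ..).symm.trans ((Submodule.Quotient.mk_eq_zero _).mpr ?_)
  refine ⟨h₁ ≫ z, Subtype.ext ?_⟩
  show P.complex.d (n + 1) n ≫ h₁ ≫ z = r • z
  calc P.complex.d (n + 1) n ≫ h₁ ≫ z
      = (P.complex.d (n + 1) n ≫ h₁ + h₂ ≫ P.complex.d (n + 2) (n + 1)) ≫ z := by simp [hz]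
    _ = r • z := by rw [← hr, Linear.smul_comp, Category.id_comp]

theorem Ext.smul_eq_zero_of_comp_eq_smul_id {X G : C} [Projective G] {a : X ⟶ G} {b : G ⟶ X}
    {r : R} (hab : a ≫ b = r • 𝟙 X) (Y : C) (n : ℕ)
    (e : ((Ext R C (n + 1)).obj (Opposite.op X)).obj Y) : r • e = 0 :=
  let P := projectiveResolution X
  P.smul_ext_eq_zero_of_smul_id_eq
    ((P.homotopySMulId hab).smul_id_f_succ_eq (P.lift_comp_lift_self_f_succ a b n)) Y e

end CategoryTheory

theorem mem_annihilator_extMod_of_comp_eq_smul {B : Type u} [CommRing B]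
    {M N F : Type u} [AddCommGroup M] [Module B M] [AddCommGroup N] [Module B N]
    [AddCommGroup F] [Module B F] [Module.Projective B F] {α : M →ₗ[B] F} {β : F →ₗ[B] M}
    {r : B} (hαβ : β ∘ₗ α = r • LinearMap.id) {i : ℕ} (hi : 0 < i) :
    r ∈ Module.annihilator B (extMod B i M N) := by
  obtain ⟨n, rfl⟩ := Nat.exists_eq_add_one.mpr hi
  have : Projective (ModuleCat.of B F) := (IsProjective.iff_projective F).mp inferInstance
  refine Module.mem_annihilator.mpr fun e ↦ Ext.smul_eq_zero_of_comp_eq_smul_id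
    (a := ModuleCat.ofHom α) (b := ModuleCat.ofHom β) ?_ _ n e
  ext m
  exact LinearMap.congr_fun hαβ m

theorem LinearMap.exists_comp_eq_smul_id_of_quotient {A M F G : Type*} [CommRing A]
    [AddCommGroup M] [Module A M] [AddCommGroup F] [Module A F]
    [AddCommGroup G] [Module A G] [Module.Projective A G]
    {ι : M →ₗ[A] F} (hι : Function.Injective ι) {x : A}
    {α : F ⧸ LinearMap.range ι →ₗ[A] G} {β : G →ₗ[A] F ⧸ LinearMap.range ι}
    (hαβ : β ∘ₗ α = x • LinearMap.id) :
    ∃ β' : F →ₗ[A] M, β' ∘ₗ ι = x • LinearMap.id := by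
  obtain ⟨β₀, hβ₀⟩ := Module.projective_lifting_property (LinearMap.range ι).mkQ β
    (Submodule.mkQ_surjective _)
  let δ : F →ₗ[A] F := x • LinearMap.id - β₀ ∘ₗ α ∘ₗ (LinearMap.range ι).mkQ
  have hδ : ∀ v, δ v ∈ LinearMap.range ι := fun v ↦ by
    rw [← Submodule.ker_mkQ (LinearMap.range ι), LinearMap.mem_ker]
    have hlift (w : G) : Submodule.Quotient.mk (β₀ w) = β w := LinearMap.congr_fun hβ₀ w
    have hβα (u : F ⧸ LinearMap.range ι) : β (α u) = x • u := LinearMap.congr_fun hαβ u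
    simp [δ, hlift, hβα]
  refine ⟨(LinearEquiv.ofInjective ι hι).symm.toLinearMap ∘ₗ δ.codRestrict _ hδ, ?_⟩
  ext m
  apply hι
  have : (LinearMap.range ι).mkQ (ι m) = 0 := by simp
  simp [δ, this, LinearEquiv.ofInjective_symm_apply]

theorem IsMinimalSyzygy.exists_comp_eq_smul_id {A : Type u} [CommRing A] [IsLocalRing A] {x : A}
    {N : Type u} [AddCommGroup N] [Module A N] (hx : x ∈ Module.annihilator A N) (k : ℕ)
    {M : Type u} [AddCommGroup M] [Module A M] (hM : IsMinimalSyzygy A k M N) :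
    ∃ (F : Type u) (_ : AddCommGroup F) (_ : Module A F), Module.Free A F ∧
      ∃ (α : M →ₗ[A] F) (β : F →ₗ[A] M), β ∘ₗ α = x • LinearMap.id := by
  induction k generalizing M with
  | zero =>
    obtain ⟨e⟩ := hM
    refine ⟨A, inferInstance, inferInstance, inferInstance, 0, 0, ?_⟩
    ext m
    apply e.injective
    simp [Module.mem_annihilator.mp hx]
  | succ k ih =>
    obtain ⟨F, _, _, hF, -, ι, hι, -, hQ⟩ := hM
    obtain ⟨G, _, _, hG, α, β, hαβ⟩ := ih hQ
    obtain ⟨β', hβ'⟩ := LinearMap.exists_comp_eq_smul_id_of_quotient hι hαβ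
    exact ⟨F, _, _, hF, ι, β', hβ'⟩

theorem LocalizedModule.map_comp_map_eq_smul_id {A : Type*} [CommRing A] (S : Submonoid A)
    {M F : Type*} [AddCommGroup M] [Module A M] [AddCommGroup F] [Module A F]
    {α : M →ₗ[A] F} {β : F →ₗ[A] M} {x : A} (hαβ : β ∘ₗ α = x • LinearMap.id) :
    map S β ∘ₗ map S α = algebraMap A (Localization S) x • LinearMap.id := by
  ext u
  induction u using LocalizedModule.induction_on with
  | h m s =>
    have hm : β (α m) = x • m := LinearMap.congr_fun hαβ m
    simp [hm, ← Localization.mk_one_eq_algebraMap, LocalizedModule.mk_smul_mk]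

theorem Ideal.eq_or_isMaximal_of_le {A : Type*} [CommRing A] {P p : Ideal A} [P.IsPrime]
    [p.IsPrime] (hP : ringKrullDim (A ⧸ P) ≤ 1) (hPp : P ≤ p) : p = P ∨ p.IsMaximal := by
  have : Ring.KrullDimLE 1 (A ⧸ P) := Ring.krullDimLE_iff.mpr hP
  have hmap : (p.map (Ideal.Quotient.mk P)).IsPrime :=
    Ideal.map_isPrime_of_surjective Ideal.Quotient.mk_surjective (by rwa [Ideal.mk_ker])
  by_cases hbot : p.map (Ideal.Quotient.mk P) = ⊥
  · left
    rw [Ideal.map_eq_bot_iff_le_ker, Ideal.mk_ker] at hbot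
    exact le_antisymm hbot hPp
  · right
    have := hmap.isMaximal_of_ne_bot hbot
    rw [← Ideal.comap_map_mk hPp]
    exact Ideal.comap_isMaximal_of_surjective _ Ideal.Quotient.mk_surjective

theorem IsLocalization.Away.eq_map_of_map_le {A : Type*} [CommRing A] [IsLocalRing A]
    {P : Ideal A} [P.IsPrime] (hP : ringKrullDim (A ⧸ P) ≤ 1)
    {f : A} (hf : f ∈ IsLocalRing.maximalIdeal A) {B : Type*} [CommRing B] [Algebra A B]
    [IsLocalization.Away f B] (q : Ideal B) [q.IsPrime] (hPq : P.map (algebraMap A B) ≤ q) :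
    q = P.map (algebraMap A B) := by
  have hfq : f ∉ q.comap (algebraMap A B) := fun h ↦
    Ideal.IsPrime.ne_top'
      (Ideal.eq_top_of_isUnit_mem q h (IsLocalization.Away.algebraMap_isUnit f))
  have hcomap : q.comap (algebraMap A B) = P := by
    refine (Ideal.eq_or_isMaximal_of_le hP (Ideal.map_le_iff_le_comap.mp hPq)).resolve_right ?_
    intro hmax
    exact hfq (IsLocalRing.eq_maximalIdeal hmax ▸ hf)
  rw [← hcomap]
  exact (IsLocalization.map_under (Submonoid.powers f) B q).symm

theorem stmt9_general (A : Type u) [CommRing A] [IsLocalRing A]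
    (d : ℕ)
    (P : Ideal A) (hP : P.IsPrime) (hht : ringKrullDim (A ⧸ P) = 1)
    (f : A) (hfm : f ∈ IsLocalRing.maximalIdeal A)
    (M : Type u) [AddCommGroup M] [Module A M]
    (hM : IsMinimalSyzygy A d M (A ⧸ P)) :
    ∀ i : ℕ, 0 < i →
      ∀ q ∈ Module.support (Localization.Away f)
        (extMod (Localization.Away f) i
          (LocalizedModule (Submonoid.powers f) M)
          (LocalizedModule (Submonoid.powers f) M)),
        q.asIdeal = Ideal.map (algebraMap A (Localization.Away f)) P := by
  intro i hi q hq
  have hann : P.map (algebraMap A (Localization.Away f)) ≤ Module.annihilator _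
      (extMod (Localization.Away f) i (LocalizedModule (Submonoid.powers f) M)
        (LocalizedModule (Submonoid.powers f) M)) := by
    refine Ideal.map_le_iff_le_comap.mpr fun x hx ↦ ?_
    obtain ⟨F, _, _, _, α, β, hαβ⟩ := hM.exists_comp_eq_smul_id (x := x)
      (by rwa [Ideal.annihilator_quotient])
    have : Module.Free (Localization.Away f) (LocalizedModule (Submonoid.powers f) F) :=
      Module.free_of_isLocalizedModule (Submonoid.powers f) (LocalizedModule.mkLinearMap _ F)
    exact mem_annihilator_extMod_of_comp_eq_smul
      (LocalizedModule.map_comp_map_eq_smul_id _ hαβ) hi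
  exact IsLocalization.Away.eq_map_of_map_le hht.le hfm q.asIdeal
    (hann.trans (Module.annihilator_le_of_mem_support hq))

/-- let `(A,m)` be an abstract complete intersection of dimension `d > 0`,
`P` a prime with `height(m/P) = 1` (i.e. `dim A/P = 1`), `f ∈ m \ P` and `M` the `d`-th
syzygy of `A/P`. Then for `i > 0` the support of `Ext^i_{A_f}(M_f, M_f)` is contained in
the maximal ideal `P·A_f` of `A_f`. -/
theorem stmt9 (A : Type u) [CommRing A] [IsLocalRing A]
    (hA : ∃ c, IsCompleteIntersectionOfCodim A c)
    (d : ℕ) (hd : ringKrullDim A = d) (hd0 : 0 < d)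
    (P : Ideal A) (hP : P.IsPrime) (hht : ringKrullDim (A ⧸ P) = 1)
    (f : A) (hfm : f ∈ IsLocalRing.maximalIdeal A) (hfP : f ∉ P)
    (M : Type u) [AddCommGroup M] [Module A M]
    (hM : IsMinimalSyzygy A d M (A ⧸ P)) :
    ∀ i : ℕ, 0 < i →
      ∀ q ∈ Module.support (Localization.Away f)
        (extMod (Localization.Away f) i
          (LocalizedModule (Submonoid.powers f) M)
          (LocalizedModule (Submonoid.powers f) M)),
        q.asIdeal = Ideal.map (algebraMap A (Localization.Away f)) P :=
  stmt9_general A d P hP hht f hfm M hM
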